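/- Let V be a finite type, c : V → V → ℝ≥0 a capacity function, S ⊆ V a subset, P ≥ 1 an integer, and let s ∈ S and t ∉ S with s ≠ t. Then the maximum all-s-t flow value of the P-fold replication c_P of S (where the sources are the P copies (s,0),…,(s,P−1) of s and the sink is the unique copy of t) equals the maximum s-t flow value of the P-reweighting c' of c with respect to S. -/

import Mathlib

/-!
STATEMENT 1: For `s ∈ S` and `t ∉ S`, the maximum all-s-t flow value of the P-fold
replication of `S` (sources: the `P` copies of `s`; sink: the unique copy of `t`)
equals the maximum s-t flow value of the P-reweighting of `c` w.r.t. `S`.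
-/

open Finset

attribute [local instance] Classical.propDecidable

noncomputable section

/-- `f` is an `s`-`t` flow for the capacity function `c`. -/
def IsFlow {W : Type*} [Fintype W] (c : W → W → NNReal) (s t : W) (f : W → W → ℝ) : Prop :=
  (∀ u v, 0 ≤ f u v ∧ f u v ≤ (c u v : ℝ)) ∧
  ∀ v, v ≠ s → v ≠ t → (∑ u, f u v) = (∑ w, f v w)

/-- The value of a flow `f` with source `s`. -/
def flowValue {W : Type*} [Fintype W] (f : W → W → ℝ) (s : W) : ℝ :=
  (∑ w, f s w) - (∑ u, f u s)

/-- The maximum `s`-`t` flow value (the greatest value attained by an `s`-`t` flow). -/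
def maxFlowValue {W : Type*} [Fintype W] (c : W → W → NNReal) (s t : W) : ℝ :=
  sSup {μ : ℝ | ∃ f, IsFlow c s t f ∧ flowValue f s = μ}

/-- `f` is an all-flow from the source set `Src` to the sink `t`. -/
def IsAllFlow {W : Type*} [Fintype W] (c : W → W → NNReal) (Src : Set W) (t : W)
    (f : W → W → ℝ) : Prop :=
  (∀ u v, 0 ≤ f u v ∧ f u v ≤ (c u v : ℝ)) ∧
  ∀ v, v ∉ Src → v ≠ t → (∑ u, f u v) = (∑ w, f v w)

/-- The maximum all-flow value from the source set `Src` to the sink `t`. -/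
def maxAllFlowValue {W : Type*} [Fintype W] (c : W → W → NNReal) (Src : Finset W) (t : W) : ℝ :=
  sSup {μ : ℝ | ∃ f, IsAllFlow c (↑Src) t f ∧ (∑ σ ∈ Src, flowValue f σ) = μ}

/-- The capacity function of the `P`-fold replication of the subset `S`. -/
def repCap {V : Type*} (c : V → V → NNReal) (S : Set V) (P : ℕ) :
    ({v : V // v ∉ S} ⊕ (↥S × Fin P)) → ({v : V // v ∉ S} ⊕ (↥S × Fin P)) → NNReal
  | Sum.inl u, Sum.inl v => c u.1 v.1
  | Sum.inl u, Sum.inr (v, _) => c u.1 v.1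
  | Sum.inr (v, _), Sum.inl u => c v.1 u.1
  | Sum.inr (u, i), Sum.inr (v, j) => if i = j then c u.1 v.1 else 0

/-- The `P`-reweighting of `c` with respect to `S`. -/
def reweight {V : Type*} (c : V → V → NNReal) (S : Set V) (P : ℕ) : V → V → NNReal :=
  fun u v => if u ∈ S ∨ v ∈ S then (P : NNReal) * c u v else c u v

/-!
Collapsing the copies of each vertex turns an all-flow of the replicated graph into an `s`-`t`
flow of the reweighted graph with the same value: the copies of an edge `uv` touching `S` have
total capacity `P · c u v`, and the sources are exactly the copies of `s`. Conversely, splitting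
an `s`-`t` flow of the reweighted graph evenly among the copies of each edge (a share `1/P` per
copy of an edge touching `S`) respects the capacities of the replication, conserves flow at every
copy, and collapses back to the original flow. So both problems attain the same set of values.
-/

section PushFlow

variable {W V : Type*} [Fintype W] [Fintype V]

def pushFlow (π : W → V) (f : W → W → ℝ) (u v : V) : ℝ :=
  ∑ a with π a = u, ∑ b with π b = v, f a b

lemma sum_pushFlow_right (π : W → V) (f : W → W → ℝ) (u : V) :
    ∑ v, pushFlow π f u v = ∑ a with π a = u, ∑ b, f a b := by
  simp only [pushFlow]
  rw [Finset.sum_comm]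
  exact Finset.sum_congr rfl fun a _ => Finset.sum_fiberwise _ π (f a)

lemma sum_pushFlow_left (π : W → V) (f : W → W → ℝ) (v : V) :
    ∑ u, pushFlow π f u v = ∑ b with π b = v, ∑ a, f a b := by
  simp only [pushFlow]
  rw [Finset.sum_fiberwise _ π fun a => ∑ b with π b = v, f a b, Finset.sum_comm]

lemma flowValue_pushFlow (π : W → V) (f : W → W → ℝ) (u : V) :
    flowValue (pushFlow π f) u = ∑ a with π a = u, flowValue f a := by
  rw [flowValue, sum_pushFlow_right, sum_pushFlow_left, ← Finset.sum_sub_distrib]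
  rfl

omit [Fintype V] in
lemma pushFlow_mono (π : W → V) {f f' : W → W → ℝ} (h : ∀ a b, f a b ≤ f' a b)
    (u v : V) :
    pushFlow π f u v ≤ pushFlow π f' u v :=
  Finset.sum_le_sum fun a _ => Finset.sum_le_sum fun b _ => h a b

lemma IsAllFlow.isFlow_pushFlow {cW : W → W → NNReal} {Src : Set W} {tW : W}
    {f : W → W → ℝ} (hf : IsAllFlow cW Src tW f) (π : W → V) {c : V → V → NNReal}
    (hc : ∀ u v, pushFlow π (fun a b => (cW a b : ℝ)) u v ≤ c u v) {s t : V}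
    (hSrc : ∀ a ∈ Src, π a = s) (htW : π tW = t) :
    IsFlow c s t (pushFlow π f) := by
  refine ⟨fun u v => ⟨?_, (pushFlow_mono π (fun a b => (hf.1 a b).2) u v).trans (hc u v)⟩,
    fun v hvs hvt => ?_⟩
  · exact Finset.sum_nonneg fun a _ => Finset.sum_nonneg fun b _ => (hf.1 a b).1
  · rw [sum_pushFlow_left, sum_pushFlow_right]
    refine Finset.sum_congr rfl fun b hb => hf.2 b (fun hbS => ?_) (fun hbt => ?_)
    · exact hvs ((Finset.mem_filter.1 hb).2 ▸ hSrc b hbS)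
    · exact hvt ((Finset.mem_filter.1 hb).2 ▸ hbt ▸ htW)

end PushFlow

section Replication

variable {V : Type*} [Fintype V] (S : Set V) (P : ℕ)

abbrev RepVertex : Type _ := {v : V // v ∉ S} ⊕ (↥S × Fin P)

def repProj : RepVertex S P → V
  | Sum.inl u => u.1
  | Sum.inr (u, _) => u.1

def splitWeight : RepVertex S P → RepVertex S P → ℝ
  | Sum.inl _, Sum.inl _ => 1
  | Sum.inl _, Sum.inr _ => (P : ℝ)⁻¹
  | Sum.inr _, Sum.inl _ => (P : ℝ)⁻¹
  | Sum.inr (_, i), Sum.inr (_, j) => if i = j then (P : ℝ)⁻¹ else 0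

def copyShare (v : V) : ℝ :=
  if v ∈ S then (P : ℝ)⁻¹ else 1

def spread (g : V → V → ℝ) (a b : RepVertex S P) : ℝ :=
  splitWeight S P a b * g (repProj S P a) (repProj S P b)

variable {S P}

lemma filter_repProj_eq_of_mem {u : V} (hu : u ∈ S) :
    (univ.filter fun a => repProj S P a = u) =
      univ.image fun i => (Sum.inr (⟨u, hu⟩, i) : RepVertex S P) := by
  ext (a | ⟨a, i⟩) <;> rw [Finset.mem_filter] <;> simp [repProj, Subtype.ext_iff, eq_comm]
  exact fun h => a.2 (h ▸ hu)

lemma filter_repProj_eq_of_notMem {u : V} (hu : u ∉ S) :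
    (univ.filter fun a => repProj S P a = u) = {(Sum.inl ⟨u, hu⟩ : RepVertex S P)} := by
  ext (a | ⟨a, i⟩) <;> rw [Finset.mem_filter] <;> simp [repProj, Subtype.ext_iff]
  exact fun h => hu (h ▸ a.2)

omit [Fintype V] in
lemma splitWeight_nonneg (a b : RepVertex S P) : 0 ≤ splitWeight S P a b := by
  rcases a with a | ⟨a, i⟩ <;> rcases b with b | ⟨b, j⟩ <;> simp only [splitWeight] <;>
    positivity

lemma sum_splitWeight_fiber_left (hP : P ≠ 0) (u : V) (b : RepVertex S P) :
    ∑ a with repProj S P a = u, splitWeight S P a b = copyShare S P (repProj S P b) := by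
  by_cases hu : u ∈ S
  · rw [filter_repProj_eq_of_mem hu, Finset.sum_image fun i _ j _ h => by simpa using h]
    rcases b with b | ⟨b, j⟩ <;> simp [splitWeight, copyShare, repProj, b.2, hP]
  · rw [filter_repProj_eq_of_notMem hu, Finset.sum_singleton]
    rcases b with b | ⟨b, j⟩ <;> simp [splitWeight, copyShare, repProj, b.2]

lemma sum_splitWeight_fiber_right (hP : P ≠ 0) (a : RepVertex S P) (v : V) :
    ∑ b with repProj S P b = v, splitWeight S P a b = copyShare S P (repProj S P a) := by
  by_cases hv : v ∈ S
  · rw [filter_repProj_eq_of_mem hv, Finset.sum_image fun i _ j _ h => by simpa using h]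
    rcases a with a | ⟨a, i⟩ <;> simp [splitWeight, copyShare, repProj, a.2, hP]
  · rw [filter_repProj_eq_of_notMem hv, Finset.sum_singleton]
    rcases a with a | ⟨a, i⟩ <;> simp [splitWeight, copyShare, repProj, a.2]

lemma sum_copyShare_fiber (hP : P ≠ 0) (v : V) :
    ∑ b with repProj S P b = v, copyShare S P (repProj S P b) = 1 := by
  by_cases hv : v ∈ S
  · rw [filter_repProj_eq_of_mem hv, Finset.sum_image fun i _ j _ h => by simpa using h]
    simp [copyShare, repProj, hv, hP]
  · rw [filter_repProj_eq_of_notMem hv, Finset.sum_singleton]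
    simp [copyShare, repProj, hv]

lemma sum_spread_fiber_left (hP : P ≠ 0) (g : V → V → ℝ) (u : V) (b : RepVertex S P) :
    ∑ a with repProj S P a = u, spread S P g a b =
      copyShare S P (repProj S P b) * g u (repProj S P b) := by
  rw [← sum_splitWeight_fiber_left hP u b, Finset.sum_mul]
  refine Finset.sum_congr rfl fun a ha => ?_
  rw [spread, (Finset.mem_filter.1 ha).2]

lemma sum_spread_fiber_right (hP : P ≠ 0) (g : V → V → ℝ) (a : RepVertex S P) (v : V) :
    ∑ b with repProj S P b = v, spread S P g a b =
      copyShare S P (repProj S P a) * g (repProj S P a) v := by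
  rw [← sum_splitWeight_fiber_right hP a v, Finset.sum_mul]
  refine Finset.sum_congr rfl fun b hb => ?_
  rw [spread, (Finset.mem_filter.1 hb).2]

lemma sum_spread_left (hP : P ≠ 0) (g : V → V → ℝ) (b : RepVertex S P) :
    ∑ a, spread S P g a b = copyShare S P (repProj S P b) * ∑ u, g u (repProj S P b) := by
  rw [← Finset.sum_fiberwise _ (repProj S P), Finset.mul_sum]
  exact Finset.sum_congr rfl fun u _ => sum_spread_fiber_left hP g u b

lemma sum_spread_right (hP : P ≠ 0) (g : V → V → ℝ) (a : RepVertex S P) :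
    ∑ b, spread S P g a b = copyShare S P (repProj S P a) * ∑ v, g (repProj S P a) v := by
  rw [← Finset.sum_fiberwise _ (repProj S P), Finset.mul_sum]
  exact Finset.sum_congr rfl fun v _ => sum_spread_fiber_right hP g a v

lemma pushFlow_repProj_spread (hP : P ≠ 0) (g : V → V → ℝ) :
    pushFlow (repProj S P) (spread S P g) = g := by
  ext u v
  rw [pushFlow, Finset.sum_comm, ← one_mul (g u v), ← sum_copyShare_fiber hP v, Finset.sum_mul]
  refine Finset.sum_congr rfl fun b hb => ?_
  rw [sum_spread_fiber_left hP, (Finset.mem_filter.1 hb).2]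

omit [Fintype V] in
lemma repCap_eq_splitWeight_mul (hP : P ≠ 0) (c : V → V → NNReal) (a b : RepVertex S P) :
    (repCap c S P a b : ℝ) =
      splitWeight S P a b * reweight c S P (repProj S P a) (repProj S P b) := by
  rcases a with a | ⟨a, i⟩ <;> rcases b with b | ⟨b, j⟩ <;>
    simp [repCap, splitWeight, reweight, repProj, a.2, b.2, hP, apply_ite ((↑) : NNReal → ℝ)]

lemma pushFlow_repProj_repCap (hP : P ≠ 0) (c : V → V → NNReal) :
    pushFlow (repProj S P) (fun a b => (repCap c S P a b : ℝ)) =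
      fun u v => (reweight c S P u v : ℝ) := by
  simp_rw [repCap_eq_splitWeight_mul hP]
  exact pushFlow_repProj_spread hP fun u v => (reweight c S P u v : ℝ)

lemma IsFlow.isAllFlow_spread (hP : P ≠ 0) {c : V → V → NNReal} {s t : V}
    {g : V → V → ℝ} (hg : IsFlow (reweight c S P) s t g) (hs : s ∈ S) (ht : t ∉ S) :
    IsAllFlow (repCap c S P) ↑(univ.image fun i => (Sum.inr (⟨s, hs⟩, i) : RepVertex S P))
      (Sum.inl ⟨t, ht⟩) (spread S P g) := by
  refine ⟨fun a b => ⟨mul_nonneg (splitWeight_nonneg a b) (hg.1 _ _).1, ?_⟩,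
    fun b hbs hbt => ?_⟩
  · rw [repCap_eq_splitWeight_mul hP]
    exact mul_le_mul_of_nonneg_left (hg.1 _ _).2 (splitWeight_nonneg a b)
  · have hbs' : repProj S P b ≠ s := fun h => hbs <| by
      rw [Finset.mem_coe, ← filter_repProj_eq_of_mem hs, Finset.mem_filter]
      exact ⟨Finset.mem_univ b, h⟩
    have hbt' : repProj S P b ≠ t := fun h => hbt <| by
      rw [← Finset.mem_singleton, ← filter_repProj_eq_of_notMem ht, Finset.mem_filter]
      exact ⟨Finset.mem_univ b, h⟩
    rw [sum_spread_left hP, sum_spread_right hP, hg.2 _ hbs' hbt']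

end Replication

theorem maxAllFlow_repCap_eq_maxFlow_reweight {V : Type*} [Fintype V]
    (c : V → V → NNReal) (S : Set V) (P : ℕ) (hP : 1 ≤ P)
    (s t : V) (hsS : s ∈ S) (ht : t ∉ S) :
    maxAllFlowValue (repCap c S P)
      (Finset.univ.image (fun i : Fin P =>
        (Sum.inr (⟨s, hsS⟩, i) : {v : V // v ∉ S} ⊕ (↥S × Fin P))))
      (Sum.inl ⟨t, ht⟩) =
    maxFlowValue (reweight c S P) s t := by
  have hP0 : P ≠ 0 := Nat.one_le_iff_ne_zero.1 hP
  have hfiber := filter_repProj_eq_of_mem (P := P) hsS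
  unfold maxAllFlowValue maxFlowValue
  congr 1
  ext μ
  constructor
  · rintro ⟨f, hf, rfl⟩
    refine ⟨pushFlow (repProj S P) f, hf.isFlow_pushFlow (repProj S P)
      (fun u v => (congrFun₂ (pushFlow_repProj_repCap hP0 c) u v).le) (fun a ha => ?_) rfl, ?_⟩
    · rw [Finset.mem_coe, ← hfiber] at ha
      exact (Finset.mem_filter.1 ha).2
    · rw [flowValue_pushFlow, hfiber]
  · rintro ⟨g, hg, rfl⟩
    refine ⟨spread S P g, hg.isAllFlow_spread hP0 hsS ht, ?_⟩
    rw [← hfiber, ← flowValue_pushFlow, pushFlow_repProj_spread hP0]
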